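/- arXiv:2211.04594 — 7 statements merged into one kernel-verified Lean document; each statement's English description precedes it below -/
import Mathlib

section
/- Let M ∈ ℝ^{2×3} be the matrix with rows (−1, 0, 1) and (0, −1, 1), and let N ∈ ℝ^{3×3} be the strictly lower triangular matrix with N₂₁ = N₃₁ = N₃₂ = 1. Then MᵀM + N + Nᵀ − 2I is negative semidefinite. -/
open Matrix

/-- The coefficient matrices of Ryu's three-operator splitting satisfy
`MᵀM + N + Nᵀ - 2I ⪯ 0`. -/
theorem stmt1 :
    let M : Matrix (Fin 2) (Fin 3) ℝ := !![-1, 0, 1; 0, -1, 1]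
    let N : Matrix (Fin 3) (Fin 3) ℝ := !![0, 0, 0; 1, 0, 0; 1, 1, 0]
    ∀ x : Fin 3 → ℝ, x ⬝ᵥ (Mᵀ * M + N + Nᵀ - (2 : ℝ) • 1).mulVec x ≤ 0 := by
  intro M N x
  simp [M, N, mulVec, dotProduct, Fin.sum_univ_succ, Matrix.mul_apply,
    Matrix.one_apply, Fin.sum_univ_three]
  nlinarith [sq_nonneg (x 0 - x 1)]
end

section
/- For n ≥ 2, let M = √(2/(n−1))·B ∈ ℝ^{(n−1)×n}, where B_{i,i} = −1, B_{i,n} = 1, and all other entries zero, and let N = (2/(n−1))·T ∈ ℝ^{n×n}, where T is the strictly lower triangular matrix of all ones. Then MᵀM + N + Nᵀ − 2I is negative semidefinite. -/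
open Matrix

/-- For the coefficient matrices of the extension of Ryu splitting to `n` operators,
`MᵀM + N + Nᵀ - 2I` is negative semidefinite. -/
theorem stmt5 (n : ℕ) (hn : 2 ≤ n)
    (M : Matrix (Fin (n - 1)) (Fin n) ℝ)
    (hM : ∀ i j, M i j = Real.sqrt (2 / ((n : ℝ) - 1)) *
      (if (j : ℕ) = (i : ℕ) then -1 else if (j : ℕ) = n - 1 then 1 else 0))
    (N : Matrix (Fin n) (Fin n) ℝ)
    (hN : ∀ i j, N i j = (2 / ((n : ℝ) - 1)) * (if (j : ℕ) < (i : ℕ) then 1 else 0)) :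
    ∀ x : Fin n → ℝ, x ⬝ᵥ (Mᵀ * M + N + Nᵀ - (2 : ℝ) • 1).mulVec x ≤ 0 := by
  intro x
  set c : ℝ := 2 / ((n : ℝ) - 1) with hcdef
  have hn2 : (2:ℝ) ≤ (n:ℝ) := by exact_mod_cast hn
  have hn1 : (0:ℝ) < (n:ℝ) - 1 := by linarith
  have hc0 : 0 ≤ c := by positivity
  have hc2 : c * ((n:ℝ) - 1) = 2 := by
    rw [hcdef]; exact div_mul_cancel₀ 2 (by linarith)
  have hsq : Real.sqrt c * Real.sqrt c = c := Real.mul_self_sqrt hc0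
  set e : Fin n → ℝ := fun j => if (j:ℕ) = n - 1 then 0 else 1 with hedef
  set y : Fin n → ℝ := fun j => e j * x j with hydef
  have hA : ∀ j k : Fin n, (Mᵀ * M + N + Nᵀ - (2 : ℝ) • (1 : Matrix (Fin n) (Fin n) ℝ)) j k
      = c * e j * e k - 2 * (if j = k then (1:ℝ) else 0) * e j := by
    intro j k
    have hterm : ∀ i : Fin (n-1), M i j * M i k =
        c * ((if (j:ℕ) = (i:ℕ) then (-1:ℝ) else if (j:ℕ) = n - 1 then 1 else 0) *
             (if (k:ℕ) = (i:ℕ) then (-1:ℝ) else if (k:ℕ) = n - 1 then 1 else 0)) := by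
      intro i
      rw [hM, hM, mul_mul_mul_comm, hsq]
    simp only [Matrix.sub_apply, Matrix.add_apply, Matrix.smul_apply,
      Matrix.transpose_apply, Matrix.mul_apply, smul_eq_mul]
    simp only [hterm]
    rw [← Finset.mul_sum]
    have hsplit : ∀ i : Fin (n-1), (i:ℕ) < n - 1 := fun i => i.isLt
    have hcard : ((n - 1 : ℕ) : ℝ) = (n:ℝ) - 1 := by
      push_cast [show (1:ℕ) ≤ n by omega]; ring
    by_cases hj : (j:ℕ) = n - 1 <;> by_cases hk : (k:ℕ) = n - 1
    · -- j = last, k = last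
      have hb : ∀ i : Fin (n-1),
          (if (j:ℕ) = (i:ℕ) then (-1:ℝ) else if (j:ℕ) = n - 1 then 1 else 0) *
          (if (k:ℕ) = (i:ℕ) then (-1:ℝ) else if (k:ℕ) = n - 1 then 1 else 0) = 1 := by
        intro i
        have h1 : ¬ ((j:ℕ) = (i:ℕ)) := by have := hsplit i; omega
        have h2 : ¬ ((k:ℕ) = (i:ℕ)) := by have := hsplit i; omega
        rw [if_neg h1, if_pos hj, if_neg h2, if_pos hk, one_mul]
      simp only [hb]
      rw [Finset.sum_const, Finset.card_univ, Fintype.card_fin, nsmul_eq_mul, mul_one, hcard]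
      have hjk : j = k := Fin.ext (by omega)
      subst hjk
      rw [hN, Matrix.one_apply_eq, if_neg (lt_irrefl (j:ℕ)), if_pos rfl]
      have hej : e j = 0 := by simp only [hedef]; rw [if_pos hj]
      rw [hej]
      linear_combination hc2
    · -- j = last, k < last
      have hklt : (k:ℕ) < n - 1 := by omega
      set k' : Fin (n-1) := ⟨(k:ℕ), hklt⟩ with hk'
      have hb : ∀ i : Fin (n-1),
          (if (j:ℕ) = (i:ℕ) then (-1:ℝ) else if (j:ℕ) = n - 1 then 1 else 0) *
          (if (k:ℕ) = (i:ℕ) then (-1:ℝ) else if (k:ℕ) = n - 1 then 1 else 0)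
          = if i = k' then (-1:ℝ) else 0 := by
        intro i
        have h1 : ¬ ((j:ℕ) = (i:ℕ)) := by have := hsplit i; omega
        rw [if_neg h1, if_pos hj, one_mul]
        by_cases hik : i = k'
        · rw [if_pos hik, if_pos (show (k:ℕ) = (i:ℕ) by rw [hik])]
        · rw [if_neg hik, if_neg (show ¬ ((k:ℕ) = (i:ℕ)) from fun h => hik (Fin.ext h.symm)),
            if_neg hk]
      simp only [hb]
      rw [Finset.sum_ite_eq', if_pos (Finset.mem_univ k')]
      have hjk : j ≠ k := fun h => hk (h ▸ hj)
      rw [hN, hN, Matrix.one_apply_ne hjk, if_pos (show (k:ℕ) < (j:ℕ) by omega),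
        if_neg (show ¬ ((j:ℕ) < (k:ℕ)) by omega), if_neg hjk]
      have hej : e j = 0 := by simp only [hedef]; rw [if_pos hj]
      rw [hej]
      ring
    · -- j < last, k = last
      have hjlt : (j:ℕ) < n - 1 := by omega
      set j' : Fin (n-1) := ⟨(j:ℕ), hjlt⟩ with hj'
      have hb : ∀ i : Fin (n-1),
          (if (j:ℕ) = (i:ℕ) then (-1:ℝ) else if (j:ℕ) = n - 1 then 1 else 0) *
          (if (k:ℕ) = (i:ℕ) then (-1:ℝ) else if (k:ℕ) = n - 1 then 1 else 0)
          = if i = j' then (-1:ℝ) else 0 := by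
        intro i
        have h2 : ¬ ((k:ℕ) = (i:ℕ)) := by have := hsplit i; omega
        rw [if_neg h2, if_pos hk, mul_one]
        by_cases hij : i = j'
        · rw [if_pos hij, if_pos (show (j:ℕ) = (i:ℕ) by rw [hij])]
        · rw [if_neg hij, if_neg (show ¬ ((j:ℕ) = (i:ℕ)) from fun h => hij (Fin.ext h.symm)),
            if_neg hj]
      simp only [hb]
      rw [Finset.sum_ite_eq', if_pos (Finset.mem_univ j')]
      have hjk : j ≠ k := fun h => hj (h ▸ hk)
      rw [hN, hN, Matrix.one_apply_ne hjk, if_neg (show ¬ ((k:ℕ) < (j:ℕ)) by omega),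
        if_pos (show (j:ℕ) < (k:ℕ) by omega), if_neg hjk]
      have hej : e j = 1 := by simp only [hedef]; rw [if_neg hj]
      have hek : e k = 0 := by simp only [hedef]; rw [if_pos hk]
      rw [hej, hek]
      ring
    · -- both < last
      have hjlt : (j:ℕ) < n - 1 := by omega
      have hklt : (k:ℕ) < n - 1 := by omega
      set j' : Fin (n-1) := ⟨(j:ℕ), hjlt⟩ with hj'
      set k' : Fin (n-1) := ⟨(k:ℕ), hklt⟩ with hk'
      have hb : ∀ i : Fin (n-1),
          (if (j:ℕ) = (i:ℕ) then (-1:ℝ) else if (j:ℕ) = n - 1 then 1 else 0) *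
          (if (k:ℕ) = (i:ℕ) then (-1:ℝ) else if (k:ℕ) = n - 1 then 1 else 0)
          = if i = j' then (if i = k' then (1:ℝ) else 0) else 0 := by
        intro i
        by_cases hij : i = j' <;> by_cases hik : i = k'
        · rw [if_pos (show (j:ℕ) = (i:ℕ) by rw [hij]), if_pos (show (k:ℕ) = (i:ℕ) by rw [hik]),
            if_pos hij, if_pos hik]
          norm_num
        · rw [if_pos (show (j:ℕ) = (i:ℕ) by rw [hij]),
            if_neg (show ¬ ((k:ℕ) = (i:ℕ)) from fun h => hik (Fin.ext h.symm)), if_neg hk,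
            if_pos hij, if_neg hik]
          ring
        · rw [if_neg (show ¬ ((j:ℕ) = (i:ℕ)) from fun h => hij (Fin.ext h.symm)), if_neg hj,
            if_neg hij]
          ring
        · rw [if_neg (show ¬ ((j:ℕ) = (i:ℕ)) from fun h => hij (Fin.ext h.symm)), if_neg hj,
            if_neg hij]
          ring
      simp only [hb]
      rw [Finset.sum_ite_eq', if_pos (Finset.mem_univ j')]
      have hej : e j = 1 := by simp only [hedef]; rw [if_neg hj]
      have hek : e k = 1 := by simp only [hedef]; rw [if_neg hk]
      by_cases hjk : j = k
      · subst hjk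
        rw [if_pos (show j' = k' from Fin.ext rfl), hN, Matrix.one_apply_eq,
          if_neg (lt_irrefl (j:ℕ)), if_pos rfl, hej]
        ring
      · have h' : j' ≠ k' := by
          intro h
          rw [hj', hk', Fin.mk.injEq] at h
          exact hjk (Fin.ext h)
        rw [if_neg h', hN, hN, Matrix.one_apply_ne hjk, if_neg hjk, hej, hek]
        have hvne : (j:ℕ) ≠ (k:ℕ) := fun h => hjk (Fin.ext h)
        rcases Nat.lt_or_ge (j:ℕ) (k:ℕ) with hlt | hge
        · rw [if_neg (show ¬ ((k:ℕ) < (j:ℕ)) by omega), if_pos hlt]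
          ring
        · rw [if_pos (show (k:ℕ) < (j:ℕ) by omega), if_neg (show ¬ ((j:ℕ) < (k:ℕ)) by omega)]
          ring
  -- compute the quadratic form
  have hQ : x ⬝ᵥ (Mᵀ * M + N + Nᵀ - (2 : ℝ) • 1).mulVec x
      = c * (∑ j, y j) ^ 2 - 2 * ∑ j, (y j) ^ 2 := by
    have hrow : ∀ j : Fin n, ((Mᵀ * M + N + Nᵀ - (2 : ℝ) • 1).mulVec x) j
        = c * e j * (∑ k, y k) - 2 * y j := by
      intro j
      simp only [Matrix.mulVec, dotProduct, hA, sub_mul]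
      rw [Finset.sum_sub_distrib]
      congr 1
      · rw [Finset.mul_sum]
        exact Finset.sum_congr rfl fun k _ => by simp only [hydef]; ring
      · have hterm : ∀ k : Fin n, 2 * (if j = k then (1:ℝ) else 0) * e j * x k
            = if k = j then 2 * (e j * x j) else 0 := by
          intro k
          by_cases h : j = k
          · subst h; rw [if_pos rfl, if_pos rfl]; ring
          · rw [if_neg h, if_neg (Ne.symm h)]; ring
        simp only [hterm]
        rw [Finset.sum_ite_eq', if_pos (Finset.mem_univ j)]
    simp only [dotProduct, hrow]
    have hyx : ∀ j : Fin n, x j * (c * e j * (∑ k, y k) - 2 * y j)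
        = c * y j * (∑ k, y k) - 2 * (y j)^2 := by
      intro j
      have he : e j * e j = e j := by
        simp only [hedef]
        by_cases h : (j:ℕ) = n - 1
        · rw [if_pos h]; norm_num
        · rw [if_neg h]; norm_num
      simp only [hydef]
      linear_combination (2 * x j ^ 2) * he
    simp only [hyx]
    rw [Finset.sum_sub_distrib, ← Finset.sum_mul, ← Finset.mul_sum, ← Finset.mul_sum]
    ring
  rw [hQ]
  set s : Finset (Fin n) := Finset.univ.filter (fun j : Fin n => ¬ ((j:ℕ) = n - 1)) with hsdef
  have hy1 : (∑ j, y j) = ∑ j ∈ s, x j := by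
    rw [hsdef, Finset.sum_filter]
    refine Finset.sum_congr rfl fun j _ => ?_
    simp only [hydef, hedef]
    by_cases h : (j:ℕ) = n - 1 <;> simp [h]
  have hy2 : (∑ j, (y j)^2) = ∑ j ∈ s, (x j)^2 := by
    rw [hsdef, Finset.sum_filter]
    refine Finset.sum_congr rfl fun j _ => ?_
    simp only [hydef, hedef]
    by_cases h : (j:ℕ) = n - 1 <;> simp [h]
  have hcard : (s.card : ℝ) = (n:ℝ) - 1 := by
    have hL : (n - 1 : ℕ) < n := by omega
    have hs : s = Finset.univ.erase (⟨n - 1, hL⟩ : Fin n) := by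
      ext j
      simp [hsdef, Finset.mem_erase, Fin.ext_iff, and_comm]
    rw [hs, Finset.card_erase_of_mem (Finset.mem_univ _)]
    simp only [Finset.card_univ, Fintype.card_fin]
    push_cast [show (1:ℕ) ≤ n by omega]
    ring
  rw [hy1, hy2]
  have hCS : (∑ j ∈ s, x j) ^ 2 ≤ (∑ j ∈ s, (x j)^2) * ((n:ℝ) - 1) := by
    have h := Finset.sum_mul_sq_le_sq_mul_sq s x (fun _ => (1:ℝ))
    simpa [hcard] using h
  have hT : 0 ≤ ∑ j ∈ s, (x j)^2 := Finset.sum_nonneg fun j _ => sq_nonneg _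
  nlinarith [mul_le_mul_of_nonneg_left hCS hc0]
end

section
/- Let H be a real Hilbert space, F₁,…,Fₙ : H ⇉ H maximally monotone, and suppose M ∈ ℝ^{m×n}, S = −Mᵀ, and strictly lower triangular N ∈ ℝ^{n×n} satisfy MᵀM + N + Nᵀ − 2I ⪯ 0. For γ > 0 define T : Hᵐ → Hᵐ by T(z) = z + γ M x, where x = J_F(S z + N x) (well-defined since N is strictly lower triangular). Then for all z, z̄ ∈ Hᵐ: ‖T(z) − T(z̄)‖² + ((1−γ)/γ)‖(I−T)(z) − (I−T)(z̄)‖² + γ⟨x − x̄, [2I − MᵀM − N − Nᵀ](x − x̄)⟩ ≤ ‖z − z̄‖², where x̄ = J_F(S z̄ + N x̄). -/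
open Matrix
open scoped RealInnerProductSpace

variable {H : Type*} [NormedAddCommGroup H] [InnerProductSpace ℝ H] [CompleteSpace H]

/-- A set-valued operator `F : H ⇉ H` is monotone. -/
def IsMonotoneOp (F : H → Set H) : Prop :=
  ∀ x y u v, u ∈ F x → v ∈ F y → 0 ≤ ⟪x - y, u - v⟫

/-- A set-valued operator `F : H ⇉ H` is maximally monotone. -/
def IsMaxMonotoneOp (F : H → Set H) : Prop :=
  IsMonotoneOp F ∧ ∀ G : H → Set H, IsMonotoneOp G → (∀ x, F x ⊆ G x) → G = F

private lemma sum_inner_matvec {p q : ℕ} (A : Matrix (Fin p) (Fin q) ℝ) (f : Fin p → H)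
    (g : Fin q → H) :
    ∑ i, ⟪f i, ∑ j, A i j • g j⟫ = ∑ i, ∑ j, A i j * ⟪f i, g j⟫ := by
  simp [inner_sum, real_inner_smul_right]

/-- Key inequality (Lemma: nonexpansivity) for the abstract frugal resolvent splitting:
with `S = -Mᵀ`, `N` strictly lower triangular, `MᵀM + N + Nᵀ - 2I ⪯ 0`,
`T(z) = z + γMx` where `x = J_F(Sz + Nx)`, one has
`‖Tz - Tz̄‖² + ((1-γ)/γ)‖(I-T)z - (I-T)z̄‖² + γ⟨x - x̄, (2I - MᵀM - N - Nᵀ)(x - x̄)⟩ ≤ ‖z - z̄‖²`. -/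
theorem stmt11 (n m : ℕ)
    (F : Fin n → H → Set H) (hF : ∀ i, IsMaxMonotoneOp (F i))
    (M : Matrix (Fin m) (Fin n) ℝ) (S : Matrix (Fin n) (Fin m) ℝ) (hS : S = -Mᵀ)
    (N : Matrix (Fin n) (Fin n) ℝ)
    (hlow : ∀ i j : Fin n, (i : ℕ) ≤ (j : ℕ) → N i j = 0)
    (hnsd : ∀ v : Fin n → ℝ, v ⬝ᵥ (Mᵀ * M + N + Nᵀ - (2 : ℝ) • 1).mulVec v ≤ 0)
    (γ : ℝ) (hγ : 0 < γ)
    (z z' : Fin m → H) (x x' : Fin n → H)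
    (hx : ∀ i, (∑ j, S i j • z j) + (∑ j, N i j • x j) - x i ∈ F i (x i))
    (hx' : ∀ i, (∑ j, S i j • z' j) + (∑ j, N i j • x' j) - x' i ∈ F i (x' i)) :
    let T : (Fin m → H) → (Fin n → H) → (Fin m → H) := fun w u i => w i + γ • ∑ j, M i j • u j
    let P : Matrix (Fin n) (Fin n) ℝ := (2 : ℝ) • 1 - Mᵀ * M - N - Nᵀ
    (∑ i, ‖T z x i - T z' x' i‖ ^ 2)
      + (1 - γ) / γ * (∑ i, ‖(z i - T z x i) - (z' i - T z' x' i)‖ ^ 2)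
      + γ * (∑ i, ⟪x i - x' i, ∑ j, P i j • (x j - x' j)⟫)
      ≤ ∑ i, ‖z i - z' i‖ ^ 2 := by
  intro T P
  have hγ0 : γ ≠ 0 := hγ.ne'
  set w : Fin m → H := fun k => ∑ j, M k j • (x j - x' j) with hw
  have h1 : ∀ i, (∑ j, M i j • x j) - ∑ j, M i j • x' j = w i := by
    intro i
    rw [hw, ← Finset.sum_sub_distrib]
    simp [smul_sub]
  -- abbreviations
  set a := ∑ i, ‖z i - z' i‖ ^ 2 with ha
  set b := ∑ i, ⟪z i - z' i, w i⟫ with hb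
  set c := ∑ i, ‖w i‖ ^ 2 with hc
  set d := ∑ i, ‖x i - x' i‖ ^ 2 with hd
  set e := ∑ i, ∑ j, N i j * ⟪x i - x' i, x j - x' j⟫ with he
  -- first term
  have hT : ∀ i, T z x i - T z' x' i = (z i - z' i) + γ • w i := by
    intro i
    simp only [T]
    rw [← h1 i, smul_sub]
    abel
  have term1 : ∑ i, ‖T z x i - T z' x' i‖ ^ 2 = a + 2 * γ * b + γ ^ 2 * c := by
    rw [ha, hb, hc, Finset.mul_sum, Finset.mul_sum, ← Finset.sum_add_distrib,
      ← Finset.sum_add_distrib]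
    refine Finset.sum_congr rfl fun i _ => ?_
    rw [hT i, norm_add_sq_real, real_inner_smul_right, norm_smul]
    simp [mul_pow, sq_abs]
    ring
  -- second term
  have hI : ∀ i, (z i - T z x i) - (z' i - T z' x' i) = -(γ • w i) := by
    intro i
    simp only [T]
    rw [← h1 i, smul_sub]
    abel
  have term2 : ∑ i, ‖(z i - T z x i) - (z' i - T z' x' i)‖ ^ 2 = γ ^ 2 * c := by
    rw [hc, Finset.mul_sum]
    refine Finset.sum_congr rfl fun i _ => ?_
    rw [hI i, norm_neg, norm_smul]
    simp [mul_pow, sq_abs]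
  -- third term
  have hMM : ∑ i, ∑ j, (Mᵀ * M) i j * ⟪x i - x' i, x j - x' j⟫ = c := by
    have hwk : ∀ k, ‖w k‖ ^ 2 = ∑ i, ∑ j, M k i * M k j * ⟪x i - x' i, x j - x' j⟫ := by
      intro k
      rw [← real_inner_self_eq_norm_sq]
      simp only [hw]
      rw [sum_inner]
      refine Finset.sum_congr rfl fun i _ => ?_
      rw [real_inner_smul_left, inner_sum, Finset.mul_sum]
      refine Finset.sum_congr rfl fun j _ => ?_
      rw [real_inner_smul_right]
      ring
    calc ∑ i, ∑ j, (Mᵀ * M) i j * ⟪x i - x' i, x j - x' j⟫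
        = ∑ i, ∑ j, ∑ k, M k i * M k j * ⟪x i - x' i, x j - x' j⟫ := by
          simp [Matrix.mul_apply, Matrix.transpose_apply, Finset.sum_mul]
      _ = ∑ i, ∑ k, ∑ j, M k i * M k j * ⟪x i - x' i, x j - x' j⟫ :=
          Finset.sum_congr rfl fun i _ => Finset.sum_comm
      _ = ∑ k, ∑ i, ∑ j, M k i * M k j * ⟪x i - x' i, x j - x' j⟫ := Finset.sum_comm
      _ = c := by
          rw [hc]
          exact Finset.sum_congr rfl fun k _ => (hwk k).symm
  have hNT : ∑ i, ∑ j, Nᵀ i j * ⟪x i - x' i, x j - x' j⟫ = e := by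
    rw [he, Finset.sum_comm]
    refine Finset.sum_congr rfl fun j _ => Finset.sum_congr rfl fun i _ => ?_
    rw [Matrix.transpose_apply, real_inner_comm]
  have hId : ∑ i, ∑ j, (((2 : ℝ) • (1 : Matrix (Fin n) (Fin n) ℝ)) i j)
      * ⟪x i - x' i, x j - x' j⟫ = 2 * d := by
    rw [hd, Finset.mul_sum]
    refine Finset.sum_congr rfl fun i _ => ?_
    simp [Matrix.one_apply, ite_mul, real_inner_self_eq_norm_sq]
  have term3 : ∑ i, ⟪x i - x' i, ∑ j, P i j • (x j - x' j)⟫ = 2 * d - c - 2 * e := by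
    rw [sum_inner_matvec]
    simp only [P, Matrix.sub_apply]
    simp only [sub_mul, Finset.sum_sub_distrib]
    rw [hMM, hNT, hId]
    have : ∑ i, ∑ j, N i j * ⟪x i - x' i, x j - x' j⟫ = e := he.symm
    rw [this]
    ring
  -- monotonicity
  have hmono : 0 ≤ ∑ i, ⟪x i - x' i,
      (∑ j, S i j • (z j - z' j)) + (∑ j, N i j • (x j - x' j)) - (x i - x' i)⟫ := by
    refine Finset.sum_nonneg fun i _ => ?_
    have h := (hF i).1 (x i) (x' i) _ _ (hx i) (hx' i)
    convert h using 2
    · rfl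
    simp only [smul_sub, Finset.sum_sub_distrib]
    abel
  have hSsum : ∑ i, ⟪x i - x' i, ∑ j, S i j • (z j - z' j)⟫ = -b := by
    rw [sum_inner_matvec, hb]
    simp only [hS, Matrix.neg_apply, Matrix.transpose_apply, neg_mul,
      Finset.sum_neg_distrib, hw]
    rw [Finset.sum_comm]
    congr 1
    refine Finset.sum_congr rfl fun j _ => ?_
    rw [inner_sum]
    refine Finset.sum_congr rfl fun i _ => ?_
    rw [real_inner_smul_right, real_inner_comm]
  have hmono' : 0 ≤ -b + e - d := by
    have expand : ∑ i, ⟪x i - x' i,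
        (∑ j, S i j • (z j - z' j)) + (∑ j, N i j • (x j - x' j)) - (x i - x' i)⟫
        = (∑ i, ⟪x i - x' i, ∑ j, S i j • (z j - z' j)⟫)
          + (∑ i, ⟪x i - x' i, ∑ j, N i j • (x j - x' j)⟫) - d := by
      rw [hd, ← Finset.sum_add_distrib, ← Finset.sum_sub_distrib]
      refine Finset.sum_congr rfl fun i _ => ?_
      rw [inner_sub_right, inner_add_right, real_inner_self_eq_norm_sq]
    rw [expand, hSsum, sum_inner_matvec, ← he] at hmono
    linarith
  -- conclude
  rw [term1, term2, term3]
  have hdiv : (1 - γ) / γ * (γ ^ 2 * c) = (1 - γ) * γ * c := by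
    field_simp
  rw [hdiv]
  nlinarith [mul_nonneg hγ.le hmono']
end

section
/- Under the assumptions of the preceding operator setup (S = −Mᵀ, N strictly lower triangular, MᵀM + N + Nᵀ − 2I ⪯ 0), the operator T(z) = z + γ M x with x = J_F(Sz + Nx) is γ-averaged nonexpansive for γ ∈ (0,1); in particular ‖T(z) − T(z̄)‖ ≤ ‖z − z̄‖ for all z, z̄ ∈ Hᵐ. -/
open Matrix
open scoped RealInnerProductSpace

variable {H : Type*} [NormedAddCommGroup H] [InnerProductSpace ℝ H] [CompleteSpace H]

set_option linter.unusedSectionVars false in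
lemma gram_nsd {n : ℕ} (Q : Matrix (Fin n) (Fin n) ℝ) (hsym : Qᵀ = Q)
    (h : ∀ v, v ⬝ᵥ Q.mulVec v ≤ 0) (u : Fin n → H) :
    ∑ i, ∑ j, Q i j * ⟪u i, u j⟫ ≤ 0 := by
  have hps : (-Q).PosSemidef := by
    refine posSemidef_iff_dotProduct_mulVec.mpr ⟨?_, ?_⟩
    · ext i j
      simp only [conjTranspose_apply, neg_apply, star_trivial, neg_inj]
      simpa using (congrFun (congrFun hsym j) i).symm
    · intro v
      have := h v
      simp only [star_trivial, neg_mulVec, dotProduct_neg]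
      linarith
  obtain ⟨B, hB⟩ := by
    letI := Matrix.instPartialOrder (𝕜 := ℝ) (n := Fin n)
    letI := Matrix.instStarOrderedRing (𝕜 := ℝ) (n := Fin n)
    letI := Matrix.instNonnegSpectrumClass (𝕜 := ℝ) (n := Fin n)
    exact CStarAlgebra.nonneg_iff_eq_star_mul_self.mp hps.nonneg
  have hQ : ∀ i j, Q i j = -∑ l, B l i * B l j := by
    intro i j
    have := congrFun (congrFun hB i) j
    simp only [Matrix.neg_apply, mul_apply, star_eq_conjTranspose, conjTranspose_apply, star_trivial] at this
    linarith
  have per : ∀ l, ‖∑ i, B l i • u i‖ ^ 2 = ∑ i, ∑ j, B l i * B l j * ⟪u i, u j⟫ := by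
    intro l
    rw [← real_inner_self_eq_norm_sq, sum_inner]
    refine Finset.sum_congr rfl fun i _ => ?_
    rw [real_inner_smul_left, inner_sum, Finset.mul_sum]
    refine Finset.sum_congr rfl fun j _ => ?_
    rw [real_inner_smul_right]; ring
  have pos : ∑ i, ∑ j, (∑ l, B l i * B l j) * ⟪u i, u j⟫
      = ∑ l, ‖∑ i, B l i • u i‖ ^ 2 := by
    simp_rw [per, Finset.sum_mul]
    calc ∑ i, ∑ j, ∑ l, B l i * B l j * ⟪u i, u j⟫
        = ∑ i, ∑ l, ∑ j, B l i * B l j * ⟪u i, u j⟫ :=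
          Finset.sum_congr rfl fun i _ => Finset.sum_comm
      _ = ∑ l, ∑ i, ∑ j, B l i * B l j * ⟪u i, u j⟫ := Finset.sum_comm
  have key : ∑ i, ∑ j, Q i j * ⟪u i, u j⟫ = -∑ l, ‖∑ i, B l i • u i‖ ^ 2 := by
    rw [← pos]
    simp_rw [hQ, neg_mul]
    simp
  rw [key, neg_nonpos]
  positivity

/-- Under the assumptions `S = -Mᵀ`, `N` strictly lower triangular,
`MᵀM + N + Nᵀ - 2I ⪯ 0`, the operator `T(z) = z + γMx`, `x = J_F(Sz + Nx)`, is
`γ`-averaged nonexpansive for `γ ∈ (0,1)`; in particular `‖Tz - Tz̄‖ ≤ ‖z - z̄‖`. -/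
theorem stmt12 (n m : ℕ)
    (F : Fin n → H → Set H) (hF : ∀ i, IsMaxMonotoneOp (F i))
    (M : Matrix (Fin m) (Fin n) ℝ) (S : Matrix (Fin n) (Fin m) ℝ) (hS : S = -Mᵀ)
    (N : Matrix (Fin n) (Fin n) ℝ)
    (hlow : ∀ i j : Fin n, (i : ℕ) ≤ (j : ℕ) → N i j = 0)
    (hnsd : ∀ v : Fin n → ℝ, v ⬝ᵥ (Mᵀ * M + N + Nᵀ - (2 : ℝ) • 1).mulVec v ≤ 0)
    (γ : ℝ) (hγ0 : 0 < γ) (hγ1 : γ < 1)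
    (z z' : Fin m → H) (x x' : Fin n → H)
    (hx : ∀ i, (∑ j, S i j • z j) + (∑ j, N i j • x j) - x i ∈ F i (x i))
    (hx' : ∀ i, (∑ j, S i j • z' j) + (∑ j, N i j • x' j) - x' i ∈ F i (x' i)) :
    let T : (Fin m → H) → (Fin n → H) → (Fin m → H) := fun w u i => w i + γ • ∑ j, M i j • u j
    ((∑ i, ‖T z x i - T z' x' i‖ ^ 2)
        + (1 - γ) / γ * (∑ i, ‖(z i - T z x i) - (z' i - T z' x' i)‖ ^ 2)
      ≤ ∑ i, ‖z i - z' i‖ ^ 2) ∧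
    Real.sqrt (∑ i, ‖T z x i - T z' x' i‖ ^ 2) ≤ Real.sqrt (∑ i, ‖z i - z' i‖ ^ 2) := by
  intro T
  have hT : ∀ (a : Fin m → H) (b : Fin n → H) (i : Fin m),
      T a b i = a i + γ • ∑ j, M i j • b j := fun _ _ _ => rfl
  -- difference of T
  have hTd : ∀ i, T z x i - T z' x' i = (z i - z' i) + γ • ∑ j, M i j • (x j - x' j) := by
    intro i
    rw [hT, hT]
    rw [show (∑ j, M i j • (x j - x' j)) = (∑ j, M i j • x j) - (∑ j, M i j • x' j) by
      rw [← Finset.sum_sub_distrib]; exact Finset.sum_congr rfl fun j _ => smul_sub _ _ _]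
    rw [smul_sub]
    abel
  have hRd : ∀ i, (z i - T z x i) - (z' i - T z' x' i)
      = -(γ • ∑ j, M i j • (x j - x' j)) := by
    intro i
    have h1 := hTd i
    have : (z i - T z x i) - (z' i - T z' x' i) = (z i - z' i) - (T z x i - T z' x' i) := by abel
    rw [this, h1]
    abel
  -- abbreviations as real numbers
  set D : ℝ := ∑ i, ⟪z i - z' i, ∑ j, M i j • (x j - x' j)⟫ with hD
  set E : ℝ := ∑ i : Fin m, ‖∑ j, M i j • (x j - x' j)‖ ^ 2 with hE
  set A : ℝ := ∑ i, ∑ j, S i j * ⟪x i - x' i, z j - z' j⟫ with hA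
  set Bs : ℝ := ∑ i, ∑ j, N i j * ⟪x i - x' i, x j - x' j⟫ with hBs
  set Cs : ℝ := ∑ i, ‖x i - x' i‖ ^ 2 with hCs
  -- monotonicity
  have mono : 0 ≤ A + Bs - Cs := by
    have hi : ∀ i, 0 ≤ (∑ j, S i j * ⟪x i - x' i, z j - z' j⟫)
        + (∑ j, N i j * ⟪x i - x' i, x j - x' j⟫) - ‖x i - x' i‖ ^ 2 := by
      intro i
      have h0 := (hF i).1 (x i) (x' i) _ _ (hx i) (hx' i)
      have hdiff : ((∑ j, S i j • z j) + (∑ j, N i j • x j) - x i)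
          - ((∑ j, S i j • z' j) + (∑ j, N i j • x' j) - x' i)
          = (∑ j, S i j • (z j - z' j)) + (∑ j, N i j • (x j - x' j)) - (x i - x' i) := by
        rw [show (∑ j, S i j • (z j - z' j)) = (∑ j, S i j • z j) - (∑ j, S i j • z' j) by
          rw [← Finset.sum_sub_distrib]; exact Finset.sum_congr rfl fun j _ => smul_sub _ _ _]
        rw [show (∑ j, N i j • (x j - x' j)) = (∑ j, N i j • x j) - (∑ j, N i j • x' j) by
          rw [← Finset.sum_sub_distrib]; exact Finset.sum_congr rfl fun j _ => smul_sub _ _ _]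
        abel
      rw [hdiff] at h0
      have hexp : ⟪x i - x' i, (∑ j, S i j • (z j - z' j)) + (∑ j, N i j • (x j - x' j))
          - (x i - x' i)⟫
          = (∑ j, S i j * ⟪x i - x' i, z j - z' j⟫)
          + (∑ j, N i j * ⟪x i - x' i, x j - x' j⟫) - ‖x i - x' i‖ ^ 2 := by
        rw [inner_sub_right, inner_add_right, inner_sum, inner_sum,
          real_inner_self_eq_norm_sq]
        simp_rw [real_inner_smul_right]
      rw [hexp] at h0
      exact h0
    calc (0:ℝ) ≤ ∑ i, ((∑ j, S i j * ⟪x i - x' i, z j - z' j⟫)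
        + (∑ j, N i j * ⟪x i - x' i, x j - x' j⟫) - ‖x i - x' i‖ ^ 2) :=
          Finset.sum_nonneg fun i _ => hi i
      _ = A + Bs - Cs := by
          rw [Finset.sum_sub_distrib, Finset.sum_add_distrib]
  -- A = -D
  have hAD : A = -D := by
    rw [hA, hD]
    have : ∀ i : Fin m, ⟪z i - z' i, ∑ j, M i j • (x j - x' j)⟫
        = ∑ j, M i j * ⟪x j - x' j, z i - z' i⟫ := by
      intro i
      rw [inner_sum]
      refine Finset.sum_congr rfl fun j _ => ?_
      rw [real_inner_smul_right, real_inner_comm]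
    simp_rw [this]
    rw [← Finset.sum_neg_distrib]
    rw [Finset.sum_comm]
    refine Finset.sum_congr rfl fun i _ => ?_
    rw [← Finset.sum_neg_distrib]
    refine Finset.sum_congr rfl fun j _ => ?_
    rw [hS]
    simp only [Matrix.neg_apply, transpose_apply]
    ring
  -- E as quadratic form
  have hEq : E = ∑ j, ∑ k, (∑ i, M i j * M i k) * ⟪x j - x' j, x k - x' k⟫ := by
    rw [hE]
    have per : ∀ i : Fin m, ‖∑ j, M i j • (x j - x' j)‖ ^ 2
        = ∑ j, ∑ k, M i j * M i k * ⟪x j - x' j, x k - x' k⟫ := by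
      intro i
      rw [← real_inner_self_eq_norm_sq, sum_inner]
      refine Finset.sum_congr rfl fun j _ => ?_
      rw [real_inner_smul_left, inner_sum, Finset.mul_sum]
      refine Finset.sum_congr rfl fun k _ => ?_
      rw [real_inner_smul_right]; ring
    simp_rw [per, Finset.sum_mul]
    calc ∑ i, ∑ j, ∑ k, M i j * M i k * ⟪x j - x' j, x k - x' k⟫
        = ∑ j, ∑ i, ∑ k, M i j * M i k * ⟪x j - x' j, x k - x' k⟫ := Finset.sum_comm
      _ = ∑ j, ∑ k, ∑ i, M i j * M i k * ⟪x j - x' j, x k - x' k⟫ :=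
          Finset.sum_congr rfl fun j _ => Finset.sum_comm
  -- symmetry of Q
  have hQsym : (Mᵀ * M + N + Nᵀ - (2:ℝ) • 1)ᵀ = Mᵀ * M + N + Nᵀ - (2:ℝ) • 1 := by
    simp only [Matrix.transpose_sub, Matrix.transpose_add, Matrix.transpose_mul,
      Matrix.transpose_transpose, Matrix.transpose_smul, Matrix.transpose_one]
    abel
  -- quadratic form of Q
  have hentry : ∀ j k : Fin n, (Mᵀ * M + N + Nᵀ - (2:ℝ) • 1 : Matrix (Fin n) (Fin n) ℝ) j k
      = (∑ i, M i j * M i k) + N j k + N k j - (if j = k then 2 else 0) := by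
    intro j k
    show (Mᵀ * M) j k + N j k + Nᵀ j k - ((2:ℝ) • (1 : Matrix (Fin n) (Fin n) ℝ)) j k = _
    simp [Matrix.mul_apply, Matrix.one_apply, mul_ite]
  have h3 : ∑ j, ∑ k, N k j * ⟪x j - x' j, x k - x' k⟫ = Bs := by
    rw [hBs, Finset.sum_comm]
    refine Finset.sum_congr rfl fun i _ => Finset.sum_congr rfl fun j _ => ?_
    rw [real_inner_comm]
  have h4 : ∑ j, ∑ k, (if j = k then (2:ℝ) else 0) * ⟪x j - x' j, x k - x' k⟫
      = 2 * Cs := by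
    rw [hCs, Finset.mul_sum]
    refine Finset.sum_congr rfl fun j _ => ?_
    simp only [ite_mul, zero_mul, Finset.sum_ite_eq, Finset.mem_univ, if_true]
    rw [real_inner_self_eq_norm_sq]
  have hQsum : ∑ j, ∑ k, (Mᵀ * M + N + Nᵀ - (2:ℝ) • 1 : Matrix (Fin n) (Fin n) ℝ) j k * ⟪x j - x' j, x k - x' k⟫
      = E + 2 * Bs - 2 * Cs := by
    simp_rw [hentry, sub_mul, add_mul, Finset.sum_sub_distrib, Finset.sum_add_distrib]
    rw [← hEq, h3, h4]
    have h2 : ∑ j, ∑ k, N j k * ⟪x j - x' j, x k - x' k⟫ = Bs := hBs.symm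
    rw [h2]
    ring
  have gram := gram_nsd _ hQsym hnsd (fun i => x i - x' i)
  rw [hQsum] at gram
  -- key inequality
  have key : 2 * D + E ≤ 0 := by linarith
  -- expansion of the two sums in the goal
  have lhs1 : ∑ i, ‖T z x i - T z' x' i‖ ^ 2 = (∑ i, ‖z i - z' i‖ ^ 2) + 2*γ*D + γ^2*E := by
    simp_rw [hTd]
    have per : ∀ i, ‖(z i - z' i) + γ • ∑ j, M i j • (x j - x' j)‖ ^ 2
        = ‖z i - z' i‖ ^ 2 + 2*γ*⟪z i - z' i, ∑ j, M i j • (x j - x' j)⟫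
          + γ^2 * ‖∑ j, M i j • (x j - x' j)‖ ^ 2 := by
      intro i
      rw [norm_add_sq_real, real_inner_smul_right, norm_smul]
      simp only [Real.norm_eq_abs, mul_pow, sq_abs]
      ring
    simp_rw [per]
    rw [Finset.sum_add_distrib, Finset.sum_add_distrib, hD, hE, Finset.mul_sum,
      Finset.mul_sum]
  have lhs2 : ∑ i, ‖(z i - T z x i) - (z' i - T z' x' i)‖ ^ 2 = γ^2 * E := by
    simp_rw [hRd]
    rw [hE, Finset.mul_sum]
    refine Finset.sum_congr rfl fun i _ => ?_
    rw [norm_neg, norm_smul]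
    simp only [Real.norm_eq_abs, mul_pow, sq_abs]
  have first : (∑ i, ‖T z x i - T z' x' i‖ ^ 2)
      + (1 - γ) / γ * (∑ i, ‖(z i - T z x i) - (z' i - T z' x' i)‖ ^ 2)
      ≤ ∑ i, ‖z i - z' i‖ ^ 2 := by
    rw [lhs1, lhs2]
    have hcoef : (1 - γ) / γ * (γ^2 * E) = (1 - γ) * γ * E := by
      field_simp
    rw [hcoef]
    have hprod : γ * (2 * D + E) ≤ 0 := mul_nonpos_of_nonneg_of_nonpos hγ0.le key
    nlinarith [hprod]
  refine ⟨first, Real.sqrt_le_sqrt ?_⟩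
  have hnn : 0 ≤ (1 - γ) / γ * (∑ i, ‖(z i - T z x i) - (z' i - T z' x' i)‖ ^ 2) := by
    apply mul_nonneg
    · apply div_nonneg <;> linarith
    · exact Finset.sum_nonneg fun i _ => by positivity
  linarith
end

section
/- Let H be a real Hilbert space, F₁,…,Fₙ : H ⇉ H maximally monotone, and let M ∈ ℝ^{m×n} with ker M = ℝe (e the all-ones vector), S = −Mᵀ, N strictly lower triangular with entries summing to n. If z ∈ Hᵐ is a fixed point of T(z) = z + γMx with x = J_F(Sz + Nx) and γ > 0, then x = (x₁,…,xₙ) satisfies x₁ = ⋯ = xₙ and the common value lies in zer(F₁ + ⋯ + Fₙ). -/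
open Matrix
open scoped RealInnerProductSpace

variable {H : Type*} [NormedAddCommGroup H] [InnerProductSpace ℝ H] [CompleteSpace H]

/-- If `z` is a fixed point of `T(z) = z + γMx`, `x = J_F(Sz + Nx)` (with `ker M = ℝe`,
`S = -Mᵀ`, entries of `N` summing to `n`, `N` strictly lower triangular), then the
coordinates of `x` all coincide and their common value is a zero of `F₁ + ⋯ + Fₙ`. -/
theorem stmt13 (n m : ℕ) (hn : 0 < n)
    (F : Fin n → H → Set H) (hF : ∀ i, IsMaxMonotoneOp (F i))
    (M : Matrix (Fin m) (Fin n) ℝ)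
    (hker : ∀ v : Fin n → ℝ, M.mulVec v = 0 ↔ ∃ c : ℝ, v = fun _ => c)
    (S : Matrix (Fin n) (Fin m) ℝ) (hS : S = -Mᵀ)
    (N : Matrix (Fin n) (Fin n) ℝ)
    (hlow : ∀ i j : Fin n, (i : ℕ) ≤ (j : ℕ) → N i j = 0)
    (hNsum : ∑ i, ∑ j, N i j = (n : ℝ))
    (γ : ℝ) (hγ : 0 < γ)
    (z : Fin m → H) (x : Fin n → H)
    (hx : ∀ i, (∑ j, S i j • z j) + (∑ j, N i j • x j) - x i ∈ F i (x i))
    (hfix : ∀ i, z i + γ • ∑ j, M i j • x j = z i) :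
    (∀ i j, x i = x j) ∧
    ∃ u : Fin n → H, (∀ i, u i ∈ F i (x ⟨0, hn⟩)) ∧ ∑ i, u i = 0 := by
  -- Mx = 0 componentwise
  have hMx : ∀ i, ∑ j, M i j • x j = 0 := by
    intro i
    have h2 : γ • ∑ j, M i j • x j = 0 := by
      have := hfix i
      exact add_eq_left.mp this
    rcases smul_eq_zero.mp h2 with h | h
    · exact absurd h hγ.ne'
    · exact h
  -- rows of M sum to zero
  have hrow : ∀ i : Fin m, ∑ j, M i j = 0 := by
    intro i
    have h1 : M.mulVec (fun _ => (1 : ℝ)) = 0 := (hker _).mpr ⟨1, rfl⟩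
    have := congrFun h1 i
    simpa [Matrix.mulVec, dotProduct] using this
  -- x is constant
  have hconst : ∀ i j, x i = x j := by
    intro i j
    have key : ∀ w : H, ⟪w, x i⟫ = ⟪w, x j⟫ := by
      intro w
      have hv : M.mulVec (fun k => ⟪w, x k⟫) = 0 := by
        funext i'
        have : ∑ k, M i' k * ⟪w, x k⟫ = ⟪w, ∑ k, M i' k • x k⟫ := by
          rw [inner_sum]
          simp [real_inner_smul_right]
        simp [Matrix.mulVec, dotProduct, this, hMx i']
      obtain ⟨c, hc⟩ := (hker _).mp hv
      have h1 := congrFun hc i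
      have h2 := congrFun hc j
      rw [h1, h2]
    have : ⟪x i - x j, x i - x j⟫ = 0 := by
      rw [inner_sub_right, key (x i - x j)]
      ring
    exact sub_eq_zero.mp (inner_self_eq_zero.mp this)
  refine ⟨hconst, fun i => (∑ j, S i j • z j) + (∑ j, N i j • x j) - x i, ?_, ?_⟩
  · intro i
    simpa only [hconst i ⟨0, hn⟩] using hx i
  · -- the sum vanishes
    have hx0 : ∀ i, x i = x ⟨0, hn⟩ := fun i => hconst i _
    have hSsum : ∑ i, ∑ j, S i j • z j = 0 := by
      rw [Finset.sum_comm]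
      refine Finset.sum_eq_zero fun j _ => ?_
      rw [← Finset.sum_smul]
      have : ∑ i, S i j = 0 := by
        simp only [hS, Matrix.neg_apply, Matrix.transpose_apply]
        rw [Finset.sum_neg_distrib, hrow j, neg_zero]
      rw [this, zero_smul]
    have hNx : ∑ i, ∑ j, N i j • x j = (n : ℝ) • x ⟨0, hn⟩ := by
      have : ∀ i, ∑ j, N i j • x j = (∑ j, N i j) • x ⟨0, hn⟩ := by
        intro i
        rw [Finset.sum_smul]
        exact Finset.sum_congr rfl fun j _ => by rw [hx0 j]
      rw [Finset.sum_congr rfl fun i _ => this i, ← Finset.sum_smul, hNsum]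
    have hxsum : ∑ i, x i = (n : ℝ) • x ⟨0, hn⟩ := by
      rw [Finset.sum_congr rfl fun i _ => hx0 i]
      simp [Finset.sum_const, Nat.cast_smul_eq_nsmul ℝ]
    rw [Finset.sum_sub_distrib, Finset.sum_add_distrib, hSsum, hNx, hxsum]
    simp
end

section
/- Let H be a real Hilbert space, F₁,…,Fₙ : H ⇉ H maximally monotone, and let M ∈ ℝ^{m×n} with ker M = ℝe, S = −Mᵀ, N strictly lower triangular with entries summing to n. If x ∈ zer(F₁ + ⋯ + Fₙ), then there exists z ∈ Hᵐ such that with x = (x,…,x) ∈ Hⁿ one has x = J_F(Sz + Nx); consequently z is a fixed point of T(z) = z + γMx. -/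
open Matrix
open scoped RealInnerProductSpace

variable {H : Type*} [NormedAddCommGroup H] [InnerProductSpace ℝ H] [CompleteSpace H]

lemma exists_preimage' (n m : ℕ) (hn : 0 < n) (M : Matrix (Fin m) (Fin n) ℝ)
    (hker : ∀ v : Fin n → ℝ, M.mulVec v = 0 ↔ ∃ c : ℝ, v = fun _ => c)
    (w : Fin n → ℝ) (hw : ∑ i, w i = 0) :
    ∃ ζ : Fin m → ℝ, Mᵀ.mulVec ζ = w := by
  classical
  set s : (Fin n → ℝ) →ₗ[ℝ] ℝ := ∑ i, LinearMap.proj i with hs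
  have hsapp : ∀ v : Fin n → ℝ, s v = ∑ i, v i := by
    intro v; simp [hs]
  have hMrow : ∀ i, ∑ j, M i j = 0 := by
    have h1 : M.mulVec (fun _ => (1:ℝ)) = 0 := (hker _).mpr ⟨1, rfl⟩
    intro i
    have := congrFun h1 i
    simpa [Matrix.mulVec, dotProduct] using this
  have hkerM : LinearMap.ker M.mulVecLin =
      Submodule.span ℝ {(fun _ => (1:ℝ) : Fin n → ℝ)} := by
    ext v
    simp only [LinearMap.mem_ker, Matrix.mulVecLin_apply, Submodule.mem_span_singleton]
    rw [hker]
    constructor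
    · rintro ⟨c, rfl⟩; exact ⟨c, by funext i; simp⟩
    · rintro ⟨a, rfl⟩; exact ⟨a, by funext i; simp⟩
  have hone : (fun _ => (1:ℝ) : Fin n → ℝ) ≠ 0 := by
    intro h
    have := congrFun h ⟨0, hn⟩
    simp at this
  have hkrank : Module.finrank ℝ (LinearMap.ker M.mulVecLin) = 1 := by
    rw [hkerM]; exact finrank_span_singleton hone
  have hrankM : M.rank + 1 = n := by
    have := LinearMap.finrank_range_add_finrank_ker M.mulVecLin
    rw [hkrank] at this
    simpa [Matrix.rank] using this
  set Z : Submodule ℝ (Fin n → ℝ) := LinearMap.ker s with hZ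
  have hZrank : Module.finrank ℝ Z + 1 = n := by
    have hsur : LinearMap.range s = ⊤ := by
      rw [LinearMap.range_eq_top]
      intro c
      refine ⟨fun _ => c / n, ?_⟩
      rw [hsapp]
      rw [Finset.sum_const, Finset.card_univ, Fintype.card_fin, nsmul_eq_mul]
      have hn0 : (n:ℝ) ≠ 0 := by exact_mod_cast hn.ne'
      field_simp
    have h2 := LinearMap.finrank_range_add_finrank_ker s
    rw [hsur] at h2
    rw [finrank_top, Module.finrank_self] at h2
    have h3 : Module.finrank ℝ (Fin n → ℝ) = n := by
      simp [Module.finrank_pi]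
    rw [h3, ← hZ] at h2
    omega
  have hle : LinearMap.range (Mᵀ.mulVecLin) ≤ Z := by
    rintro - ⟨ζ, rfl⟩
    simp only [hZ, LinearMap.mem_ker, hsapp]
    rw [Matrix.mulVecLin_apply]
    calc ∑ i, Mᵀ.mulVec ζ i = ∑ i, ∑ j, M j i * ζ j := by
          simp [Matrix.mulVec, dotProduct, Matrix.transpose_apply]
      _ = ∑ j, (∑ i, M j i) * ζ j := by
          rw [Finset.sum_comm]; simp [Finset.sum_mul]
      _ = 0 := by simp [hMrow]
  have heq : LinearMap.range (Mᵀ.mulVecLin) = Z := by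
    apply Submodule.eq_of_le_of_finrank_le hle
    have : Module.finrank ℝ (LinearMap.range (Mᵀ.mulVecLin)) = Mᵀ.rank := rfl
    rw [this, Matrix.rank_transpose]
    omega
  have : w ∈ LinearMap.range (Mᵀ.mulVecLin) := by
    rw [heq]
    simp [hZ, LinearMap.mem_ker, hsapp, hw]
  obtain ⟨ζ, hζ⟩ := this
  exact ⟨ζ, hζ⟩

/-- If `x ∈ zer(F₁ + ⋯ + Fₙ)`, then (with `ker M = ℝe`, `S = -Mᵀ`, `N` strictly lower
triangular with entries summing to `n`) there exists `z` such that the constant vector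
`(x,…,x)` satisfies `x = J_F(Sz + Nx)`; consequently `z` is a fixed point of
`T(z) = z + γMx`. -/
theorem stmt14 (n m : ℕ) (hn : 0 < n)
    (F : Fin n → H → Set H) (hF : ∀ i, IsMaxMonotoneOp (F i))
    (M : Matrix (Fin m) (Fin n) ℝ)
    (hker : ∀ v : Fin n → ℝ, M.mulVec v = 0 ↔ ∃ c : ℝ, v = fun _ => c)
    (S : Matrix (Fin n) (Fin m) ℝ) (hS : S = -Mᵀ)
    (N : Matrix (Fin n) (Fin n) ℝ)
    (hlow : ∀ i j : Fin n, (i : ℕ) ≤ (j : ℕ) → N i j = 0)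
    (hNsum : ∑ i, ∑ j, N i j = (n : ℝ))
    (γ : ℝ) (hγ : 0 < γ)
    (x : H) (u : Fin n → H) (hu : ∀ i, u i ∈ F i x) (husum : ∑ i, u i = 0) :
    ∃ z : Fin m → H,
      (∀ i, (∑ j, S i j • z j) + (∑ j, N i j • x) - x ∈ F i x) ∧
      (∀ i, z i + γ • ∑ j, M i j • x = z i) := by
  classical
  have hMrow : ∀ i, ∑ j, M i j = 0 := by
    have h1 : M.mulVec (fun _ => (1:ℝ)) = 0 := (hker _).mpr ⟨1, rfl⟩
    intro i
    have := congrFun h1 i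
    simpa [Matrix.mulVec, dotProduct] using this
  -- preimages of e_k - (1/n)·1
  have hwsum : ∀ k : Fin n, ∑ i, ((Pi.single k (1:ℝ) : Fin n → ℝ) i - 1/n) = 0 := by
    intro k
    rw [Finset.sum_sub_distrib]
    simp [Finset.sum_pi_single]
    field_simp
    simp
  choose ζ hζ using fun k : Fin n =>
    exists_preimage' n m hn M hker (fun i => (Pi.single k (1:ℝ) : Fin n → ℝ) i - 1/n) (hwsum k)
  -- target vectors
  set d : Fin n → H := fun k => ((∑ l, N k l) - 1) • x - u k with hd
  have hdsum : ∑ k, d k = 0 := by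
    simp only [hd, Finset.sum_sub_distrib, sub_smul, one_smul, ← Finset.sum_smul, hNsum,
      husum, sub_zero]
    rw [Finset.sum_const, Finset.card_univ, Fintype.card_fin, Nat.cast_smul_eq_nsmul ℝ]
    exact sub_self _
  refine ⟨fun j => ∑ k, ζ k j • d k, ?_, ?_⟩
  · intro i
    have key : ∑ j, S i j • (∑ k, ζ k j • d k) = -(d i) := by
      have h1 : ∀ k : Fin n, ∑ j, (S i j * ζ k j) = 1/n - (Pi.single k (1:ℝ) : Fin n → ℝ) i := by
        intro k
        have h2 := congrFun (hζ k) i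
        have h3 : Mᵀ.mulVec (ζ k) i = ∑ j, M j i * ζ k j := by
          simp [Matrix.mulVec, dotProduct, Matrix.transpose_apply]
        rw [h3] at h2
        have : ∀ j, S i j = -(M j i) := by intro j; rw [hS]; simp
        simp only [this, neg_mul]
        rw [Finset.sum_neg_distrib, h2]
        ring
      calc ∑ j, S i j • (∑ k, ζ k j • d k)
          = ∑ j, ∑ k, (S i j * ζ k j) • d k := by
            refine Finset.sum_congr rfl fun j _ => ?_
            rw [Finset.smul_sum]
            exact Finset.sum_congr rfl fun k _ => smul_smul _ _ _
        _ = ∑ k, (∑ j, S i j * ζ k j) • d k := by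
            rw [Finset.sum_comm]
            exact Finset.sum_congr rfl fun k _ => (Finset.sum_smul).symm
        _ = ∑ k, ((1/n : ℝ) - (Pi.single k (1:ℝ) : Fin n → ℝ) i) • d k := by simp_rw [h1]
        _ = (1/n : ℝ) • (∑ k, d k) - ∑ k, ((Pi.single k (1:ℝ) : Fin n → ℝ) i) • d k := by
            rw [Finset.smul_sum, ← Finset.sum_sub_distrib]
            exact Finset.sum_congr rfl fun k _ => (sub_smul _ _ _)
        _ = -(d i) := by
            rw [hdsum, smul_zero, zero_sub]
            congr 1
            rw [Finset.sum_eq_single i]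
            · simp
            · intro k _ hk; simp [Pi.single_apply, hk]
            · intro h; exact absurd (Finset.mem_univ i) h
    rw [key]
    have hNx : ∑ j, N i j • x = (∑ j, N i j) • x := (Finset.sum_smul).symm
    rw [hNx, hd]
    have : -(((∑ l, N i l) - 1) • x - u i) + (∑ j, N i j) • x - x = u i := by
      simp only [sub_smul, one_smul]
      abel
    rw [this]
    exact hu i
  · intro i
    have : ∑ j, M i j • x = (∑ j, M i j) • x := (Finset.sum_smul).symm
    rw [this, hMrow i, zero_smul, smul_zero, add_zero]
end

section
/- Let H be a real Hilbert space, F₁,…,Fₙ maximally monotone with zer(ΣFᵢ) ≠ ∅, and suppose the coefficient matrices M, S = −Mᵀ, N satisfy: ker M = ℝe, the entries of N sum to n, N is strictly lower triangular, and MᵀM + N + Nᵀ − 2I ⪯ 0. Fix γ ∈ (0,1) and z⁰ ∈ Hᵐ, and iterate z^{k+1} = z^k + γM x^k with x^k = J_F(Sz^k + Nx^k). Then z^k − z^{k+1} → 0 strongly, and for every s ∈ ℝⁿ with Σᵢsᵢ = 0 one has Σᵢ sᵢ x^k_i → 0 strongly. -/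
open Matrix Filter
open scoped RealInnerProductSpace Topology

section AuxLemmas
variable {H : Type*} [NormedAddCommGroup H] [InnerProductSpace ℝ H]

/-- Quadratic form identity for `Bᵀ * B` with Hilbert-space-valued vectors. -/
lemma auxQ17 {n m : ℕ} (B : Matrix (Fin m) (Fin n) ℝ) (x : Fin n → H) :
    ∑ i, ∑ j, (Bᵀ * B) i j * ⟪x i, x j⟫ = ∑ l, ‖∑ i, B l i • x i‖ ^ 2 := by
  have h1 : ∀ l, ‖∑ i, B l i • x i‖ ^ 2 = ∑ i, ∑ j, B l i * B l j * ⟪x i, x j⟫ := by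
    intro l
    rw [← real_inner_self_eq_norm_sq, sum_inner]
    refine Finset.sum_congr rfl fun i _ => ?_
    rw [real_inner_smul_left, inner_sum, Finset.mul_sum]
    refine Finset.sum_congr rfl fun j _ => ?_
    rw [real_inner_smul_right]; ring
  have h2 : ∀ i j, (Bᵀ * B) i j * ⟪x i, x j⟫ = ∑ l, B l i * B l j * ⟪x i, x j⟫ := by
    intro i j
    rw [Matrix.mul_apply, Finset.sum_mul]
    exact Finset.sum_congr rfl fun l _ => by simp [Matrix.transpose_apply]
  calc ∑ i, ∑ j, (Bᵀ * B) i j * ⟪x i, x j⟫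
      = ∑ i, ∑ j, ∑ l, B l i * B l j * ⟪x i, x j⟫ := by simp only [h2]
    _ = ∑ i, ∑ l, ∑ j, B l i * B l j * ⟪x i, x j⟫ :=
        Finset.sum_congr rfl fun i _ => Finset.sum_comm
    _ = ∑ l, ∑ i, ∑ j, B l i * B l j * ⟪x i, x j⟫ := Finset.sum_comm
    _ = ∑ l, ‖∑ i, B l i • x i‖ ^ 2 := Finset.sum_congr rfl fun l _ => (h1 l).symm

/-- Negative semidefinite real quadratic forms extend to Hilbert-space-valued vectors. -/
lemma auxC17 {n : ℕ} (A : Matrix (Fin n) (Fin n) ℝ) (hsym : Aᵀ = A)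
    (hnsd : ∀ v : Fin n → ℝ, v ⬝ᵥ A.mulVec v ≤ 0) (x : Fin n → H) :
    ∑ i, ∑ j, A i j * ⟪x i, x j⟫ ≤ 0 := by
  have hps : (-A).PosSemidef := by
    refine Matrix.PosSemidef.of_dotProduct_mulVec_nonneg ?_ ?_
    · show (-A)ᴴ = -A
      rw [conjTranspose_neg]
      have : Aᴴ = Aᵀ := by ext i j; simp [conjTranspose_apply]
      rw [this, hsym]
    · intro v
      have := hnsd v
      have hsv : star v = v := by simp
      rw [hsv]
      simp only [Matrix.neg_mulVec, dotProduct_neg]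
      linarith
  obtain ⟨B, hB⟩ : ∃ B : Matrix (Fin n) (Fin n) ℝ, -A = Bᴴ * B := by
    open scoped MatrixOrder in
    obtain ⟨B, hB⟩ := CStarAlgebra.nonneg_iff_eq_star_mul_self.mp hps.nonneg
    exact ⟨B, hB⟩
  have hBt : (-A) = Bᵀ * B := by
    rw [hB]; ext i j; simp [Matrix.mul_apply, conjTranspose_apply]
  have hA : A = -(Bᵀ * B) := by rw [← hBt, neg_neg]
  have : ∑ i, ∑ j, A i j * ⟪x i, x j⟫ = -(∑ l, ‖∑ i, B l i • x i‖ ^ 2) := by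
    rw [← auxQ17 B x, ← Finset.sum_neg_distrib]
    refine Finset.sum_congr rfl fun i _ => ?_
    rw [← Finset.sum_neg_distrib]
    refine Finset.sum_congr rfl fun j _ => ?_
    rw [hA]; simp
  rw [this]
  simp only [neg_nonpos]
  exact Finset.sum_nonneg fun l _ => sq_nonneg _

/-- Every zero-sum vector is in the range of `Mᵀ` when `ker M` is the constants. -/
lemma auxA17 {n m : ℕ} (hn : 0 < n) (M : Matrix (Fin m) (Fin n) ℝ)
    (hker : ∀ v : Fin n → ℝ, M.mulVec v = 0 ↔ ∃ c : ℝ, v = fun _ => c) :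
    ∀ t : Fin n → ℝ, ∑ i, t i = 0 → ∃ v : Fin m → ℝ, Mᵀ.mulVec v = t := by
  classical
  set ℓ : (Fin n → ℝ) →ₗ[ℝ] ℝ :=
    { toFun := fun t => ∑ i, t i
      map_add' := fun a b => by simp [Finset.sum_add_distrib]
      map_smul' := fun c a => by simp [Finset.mul_sum] }
  have hkerM : LinearMap.ker M.mulVecLin = Submodule.span ℝ {(fun _ => (1:ℝ) : Fin n → ℝ)} := by
    ext v
    rw [LinearMap.mem_ker, Matrix.mulVecLin_apply, hker, Submodule.mem_span_singleton]
    constructor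
    · rintro ⟨c, rfl⟩; exact ⟨c, by ext i; simp⟩
    · rintro ⟨c, rfl⟩; exact ⟨c, by ext i; simp⟩
  have hone : (fun _ => (1:ℝ) : Fin n → ℝ) ≠ 0 := by
    intro h
    have := congrFun h ⟨0, hn⟩
    norm_num at this
  have hrankM : Module.finrank ℝ (LinearMap.range M.mulVecLin) + 1 = n := by
    have := LinearMap.finrank_range_add_finrank_ker M.mulVecLin
    rwa [hkerM, finrank_span_singleton hone, Module.finrank_fin_fun] at this
  have hrangeℓ : LinearMap.range ℓ = ⊤ := by
    rw [LinearMap.range_eq_top]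
    intro r
    refine ⟨fun _ => r / n, ?_⟩
    show ∑ _i : Fin n, ((r : ℝ) / n) = r
    rw [Finset.sum_const, Finset.card_univ, Fintype.card_fin, nsmul_eq_mul]
    field_simp
  have hkerℓ : Module.finrank ℝ (LinearMap.ker ℓ) + 1 = n := by
    have := LinearMap.finrank_range_add_finrank_ker ℓ
    rw [hrangeℓ, finrank_top, Module.finrank_self, Module.finrank_fin_fun] at this
    omega
  have hle : LinearMap.range Mᵀ.mulVecLin ≤ LinearMap.ker ℓ := by
    rintro t ⟨v, rfl⟩
    rw [LinearMap.mem_ker]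
    show ∑ i, Mᵀ.mulVec v i = 0
    have hMe : M.mulVec (fun _ => 1) = 0 := (hker _).mpr ⟨1, rfl⟩
    have : ∑ i, Mᵀ.mulVec v i = ∑ j, v j * M.mulVec (fun _ => 1) j := by
      simp only [Matrix.mulVec, dotProduct, Matrix.transpose_apply, Finset.mul_sum]
      rw [Finset.sum_comm]
      exact Finset.sum_congr rfl fun j _ => Finset.sum_congr rfl fun i _ => by ring
    rw [this, hMe]
    simp
  have hrankMt : Module.finrank ℝ (LinearMap.range Mᵀ.mulVecLin) = n - 1 := by
    have h1 : Mᵀ.rank = M.rank := Matrix.rank_transpose M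
    have h2 : Mᵀ.rank = Module.finrank ℝ (LinearMap.range Mᵀ.mulVecLin) := rfl
    have h3 : M.rank = Module.finrank ℝ (LinearMap.range M.mulVecLin) := rfl
    omega
  have heq : LinearMap.range Mᵀ.mulVecLin = LinearMap.ker ℓ := by
    apply Submodule.eq_of_le_of_finrank_le hle
    rw [hrankMt]
    omega
  intro t ht
  have : t ∈ LinearMap.ker ℓ := by rwa [LinearMap.mem_ker]
  rw [← heq] at this
  obtain ⟨v, hv⟩ := this
  exact ⟨v, hv⟩

/-- `H`-valued version: every zero-sum `w` is in the range of `Mᵀ ⊗ I`. -/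
lemma auxB17 {H : Type*} [AddCommGroup H] [Module ℝ H] {n m : ℕ} (hn : 0 < n)
    (M : Matrix (Fin m) (Fin n) ℝ)
    (hker : ∀ v : Fin n → ℝ, M.mulVec v = 0 ↔ ∃ c : ℝ, v = fun _ => c)
    (w : Fin n → H) (hw : ∑ i, w i = 0) :
    ∃ ζ : Fin m → H, ∀ i, ∑ j, M j i • ζ j = w i := by
  classical
  have hπ : ∀ l : Fin n, ∑ i, ((if i = l then (1:ℝ) else 0) - 1 / n) = 0 := by
    intro l
    rw [Finset.sum_sub_distrib]
    simp [Finset.sum_ite_eq', Finset.card_univ]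
    field_simp
    norm_num
  choose g hg using fun l : Fin n =>
    auxA17 hn M hker (fun i => (if i = l then (1:ℝ) else 0) - 1 / n) (hπ l)
  refine ⟨fun j => ∑ l, g l j • w l, fun i => ?_⟩
  have hgl : ∀ l, ∑ j, M j i * g l j = (if i = l then (1:ℝ) else 0) - 1 / n := by
    intro l
    have := congrFun (hg l) i
    simpa [Matrix.mulVec, dotProduct, Matrix.transpose_apply] using this
  calc ∑ j, M j i • ∑ l, g l j • w l
      = ∑ j, ∑ l, (M j i * g l j) • w l := by
        refine Finset.sum_congr rfl fun j _ => ?_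
        rw [Finset.smul_sum]
        exact Finset.sum_congr rfl fun l _ => (smul_smul _ _ _)
    _ = ∑ l, (∑ j, M j i * g l j) • w l := by
        rw [Finset.sum_comm]
        exact Finset.sum_congr rfl fun l _ => (Finset.sum_smul).symm
    _ = ∑ l, ((if i = l then (1:ℝ) else 0) - 1 / n) • w l := by
        simp only [hgl]
    _ = w i := by
        simp only [sub_smul, Finset.sum_sub_distrib, ite_smul, one_smul, zero_smul]
        rw [← Finset.smul_sum (r := (1/n : ℝ)), hw, smul_zero, sub_zero,
          Finset.sum_ite_eq Finset.univ i]
        simp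

end AuxLemmas

variable {H : Type*} [NormedAddCommGroup H] [InnerProductSpace ℝ H] [CompleteSpace H]

/-- Part (a) of the main convergence theorem: for the iteration
`z^{k+1} = z^k + γMx^k`, `x^k = J_F(Sz^k + Nx^k)`, one has `z^k - z^{k+1} → 0`
strongly and `∑ᵢ sᵢ x^k_i → 0` strongly for every `s` with `∑ᵢ sᵢ = 0`. -/
theorem stmt17 (n m : ℕ)
    (F : Fin n → H → Set H) (hF : ∀ i, IsMaxMonotoneOp (F i))
    (M : Matrix (Fin m) (Fin n) ℝ)
    (hker : ∀ v : Fin n → ℝ, M.mulVec v = 0 ↔ ∃ c : ℝ, v = fun _ => c)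
    (S : Matrix (Fin n) (Fin m) ℝ) (hS : S = -Mᵀ)
    (N : Matrix (Fin n) (Fin n) ℝ)
    (hlow : ∀ i j : Fin n, (i : ℕ) ≤ (j : ℕ) → N i j = 0)
    (hNsum : ∑ i, ∑ j, N i j = (n : ℝ))
    (hnsd : ∀ v : Fin n → ℝ, v ⬝ᵥ (Mᵀ * M + N + Nᵀ - (2 : ℝ) • 1).mulVec v ≤ 0)
    (hzer : ∃ (p : H) (u : Fin n → H), (∀ i, u i ∈ F i p) ∧ ∑ i, u i = 0)
    (γ : ℝ) (hγ0 : 0 < γ) (hγ1 : γ < 1)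
    (z : ℕ → Fin m → H) (x : ℕ → Fin n → H)
    (hx : ∀ k i, (∑ j, S i j • z k j) + (∑ j, N i j • x k j) - x k i ∈ F i (x k i))
    (hz : ∀ k i, z (k + 1) i = z k i + γ • ∑ j, M i j • x k j) :
    Tendsto (fun k => ∑ i, ‖z k i - z (k + 1) i‖) atTop (𝓝 0) ∧
    ∀ s : Fin n → ℝ, ∑ i, s i = 0 →
      Tendsto (fun k => ‖∑ i, s i • x k i‖) atTop (𝓝 0) := by
  classical
  obtain ⟨p, u, hu, husum⟩ := hzer
  rcases Nat.eq_zero_or_pos n with hn0 | hn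
  · subst hn0
    constructor
    · have h0 : ∀ k, ∑ i, ‖z k i - z (k + 1) i‖ = 0 := by
        intro k
        refine Finset.sum_eq_zero fun i _ => ?_
        rw [hz k i]
        simp
      simp only [h0]
      exact tendsto_const_nhds
    · intro s hs
      have h0 : ∀ k, ‖∑ i : Fin 0, s i • x k i‖ = 0 := fun k => by simp
      simp only [h0]
      exact tendsto_const_nhds
  -- main case : n ≥ 1
  have hMe : ∀ j, ∑ i, M j i = 0 := by
    have h := (hker (fun _ => 1)).mpr ⟨1, rfl⟩
    intro j
    have := congrFun h j
    simpa [Matrix.mulVec, dotProduct] using this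
  -- the fixed point z*
  have hwsum : ∑ i, (u i + (1 - ∑ j, N i j) • p) = 0 := by
    rw [Finset.sum_add_distrib, husum, zero_add, ← Finset.sum_smul]
    have h1 : ∑ i, ((1:ℝ) - ∑ j, N i j) = 0 := by
      rw [Finset.sum_sub_distrib, hNsum]; simp
    rw [h1, zero_smul]
  obtain ⟨zs, hzs⟩ := auxB17 hn M hker (fun i => -(u i + (1 - ∑ j, N i j) • p))
    (by rw [Finset.sum_neg_distrib, hwsum, neg_zero])
  have hSzs : ∀ i, ∑ j, S i j • zs j = u i + (1 - ∑ j, N i j) • p := by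
    intro i
    have h1 : ∑ j, S i j • zs j = -∑ j, M j i • zs j := by
      rw [← Finset.sum_neg_distrib]
      refine Finset.sum_congr rfl fun j _ => ?_
      rw [hS]
      simp [Matrix.neg_apply, Matrix.transpose_apply]
    rw [h1, hzs, neg_neg]
  -- basic iteration quantities
  set Mx : ℕ → Fin m → H := fun k j => ∑ i, M j i • x k i with hMx_def
  have hzz : ∀ k j, z (k + 1) j - z k j = γ • Mx k j := by
    intro k j
    rw [hz k j]
    abel
  have hMxbar : ∀ k j, ∑ i, M j i • (x k i - p) = Mx k j := by
    intro k j
    simp only [smul_sub, Finset.sum_sub_distrib]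
    rw [← Finset.sum_smul, hMe j, zero_smul, sub_zero]
  set P : ℕ → ℝ := fun k => ∑ j, ‖Mx k j‖ ^ 2 with hP_def
  have hPnonneg : ∀ k, 0 ≤ P k := fun k => by positivity
  -- Key inequality 1
  have key1 : ∀ k, ∑ j, ⟪z k j - zs j, Mx k j⟫ ≤ -(P k / 2) := by
    intro k
    have mono : ∀ i, (0:ℝ) ≤ ⟪x k i - p,
        (∑ j, S i j • (z k j - zs j)) + (∑ j, N i j • (x k j - p)) - (x k i - p)⟫ := by
      intro i
      have h0 := (hF i).1 (x k i) p _ (u i) (hx k i) (hu i)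
      have harg : ((∑ j, S i j • z k j) + (∑ j, N i j • x k j) - x k i) - u i
          = (∑ j, S i j • (z k j - zs j)) + (∑ j, N i j • (x k j - p)) - (x k i - p) := by
        simp only [smul_sub, Finset.sum_sub_distrib]
        rw [hSzs i, ← Finset.sum_smul]
        module
      rwa [harg] at h0
    have hsum0 : (0:ℝ) ≤ ∑ i, ((∑ j, S i j * ⟪x k i - p, z k j - zs j⟫)
        + (∑ j, N i j * ⟪x k i - p, x k j - p⟫) - ⟪x k i - p, x k i - p⟫) := by
      refine Finset.sum_nonneg fun i _ => ?_
      have hexp : ⟪x k i - p, (∑ j, S i j • (z k j - zs j)) + (∑ j, N i j • (x k j - p))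
          - (x k i - p)⟫
          = (∑ j, S i j * ⟪x k i - p, z k j - zs j⟫)
            + (∑ j, N i j * ⟪x k i - p, x k j - p⟫) - ⟪x k i - p, x k i - p⟫ := by
        rw [inner_sub_right, inner_add_right, inner_sum, inner_sum]
        congr 2
        · exact Finset.sum_congr rfl fun j _ => real_inner_smul_right _ _ _
        · exact Finset.sum_congr rfl fun j _ => real_inner_smul_right _ _ _
      rw [← hexp]
      exact mono i
    rw [Finset.sum_sub_distrib, Finset.sum_add_distrib] at hsum0
    have hT1 : ∑ i, ∑ j, S i j * ⟪x k i - p, z k j - zs j⟫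
        = -∑ j, ⟪Mx k j, z k j - zs j⟫ := by
      rw [Finset.sum_comm, ← Finset.sum_neg_distrib]
      refine Finset.sum_congr rfl fun j _ => ?_
      rw [← hMxbar k j, sum_inner, ← Finset.sum_neg_distrib]
      refine Finset.sum_congr rfl fun i _ => ?_
      rw [real_inner_smul_left, hS]
      simp [Matrix.neg_apply, Matrix.transpose_apply]
    -- NSD bound
    have hA0sym : (Mᵀ * M + N + Nᵀ - (2:ℝ) • 1)ᵀ = Mᵀ * M + N + Nᵀ - (2:ℝ) • 1 := by
      simp only [Matrix.transpose_sub, Matrix.transpose_add, Matrix.transpose_mul,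
        Matrix.transpose_transpose, Matrix.transpose_smul, Matrix.transpose_one]
      abel
    have hQ := auxC17 (Mᵀ * M + N + Nᵀ - (2:ℝ) • 1) hA0sym hnsd (fun i => x k i - p)
    have hentry : ∀ i j : Fin n, (Mᵀ * M + N + Nᵀ - (2:ℝ) • 1 : Matrix (Fin n) (Fin n) ℝ) i j * ⟪x k i - p, x k j - p⟫
        = (Mᵀ * M) i j * ⟪x k i - p, x k j - p⟫ + N i j * ⟪x k i - p, x k j - p⟫
          + N j i * ⟪x k i - p, x k j - p⟫
          - (2 * (if i = j then (1:ℝ) else 0)) * ⟪x k i - p, x k j - p⟫ := by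
      intro i j
      simp only [Matrix.sub_apply, Matrix.add_apply, Matrix.smul_apply, Matrix.transpose_apply,
        Matrix.one_apply, smul_eq_mul]
      ring
    have hdiag : ∀ i : Fin n, ∑ j, (2 * (if i = j then (1:ℝ) else 0)) * ⟪x k i - p, x k j - p⟫
        = 2 * ⟪x k i - p, x k i - p⟫ := by
      intro i
      rw [Finset.sum_congr rfl (fun j _ => by
        rw [mul_ite, mul_one, mul_zero, ite_mul, zero_mul] : ∀ j ∈ Finset.univ,
          (2 * (if i = j then (1:ℝ) else 0)) * ⟪x k i - p, x k j - p⟫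
          = if i = j then 2 * ⟪x k i - p, x k j - p⟫ else 0)]
      rw [Finset.sum_ite_eq Finset.univ i]
      simp
    have hsplit : ∑ i, ∑ j, (Mᵀ * M + N + Nᵀ - (2:ℝ) • 1 : Matrix (Fin n) (Fin n) ℝ) i j * ⟪x k i - p, x k j - p⟫
        = (∑ i, ∑ j, (Mᵀ * M) i j * ⟪x k i - p, x k j - p⟫)
          + (∑ i, ∑ j, N i j * ⟪x k i - p, x k j - p⟫)
          + (∑ i, ∑ j, N j i * ⟪x k i - p, x k j - p⟫)
          - 2 * ∑ i, ⟪x k i - p, x k i - p⟫ := by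
      simp only [hentry, Finset.sum_sub_distrib, Finset.sum_add_distrib]
      rw [Finset.mul_sum]
      congr 1
      exact Finset.sum_congr rfl fun i _ => hdiag i
    have hNt : ∑ i, ∑ j, N j i * ⟪x k i - p, x k j - p⟫
        = ∑ i, ∑ j, N i j * ⟪x k i - p, x k j - p⟫ := by
      rw [Finset.sum_comm]
      exact Finset.sum_congr rfl fun i _ => Finset.sum_congr rfl fun j _ => by
        rw [real_inner_comm]
    have hMQ : ∑ i, ∑ j, (Mᵀ * M) i j * ⟪x k i - p, x k j - p⟫ = P k := by
      rw [auxQ17 M (fun i => x k i - p)]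
      exact Finset.sum_congr rfl fun l _ => by rw [hMxbar k l]
    rw [hsplit, hNt, hMQ] at hQ
    rw [hT1] at hsum0
    have hflip : ∑ j, ⟪z k j - zs j, Mx k j⟫ = ∑ j, ⟪Mx k j, z k j - zs j⟫ :=
      Finset.sum_congr rfl fun j _ => real_inner_comm _ _
    rw [hflip]
    linarith
  -- descent of the Lyapunov function
  set ρ : ℕ → ℝ := fun k => ∑ j, ‖z k j - zs j‖ ^ 2 with hρ_def
  have hρnonneg : ∀ k, 0 ≤ ρ k := fun k => by positivity
  set D : ℕ → ℝ := fun k => ∑ j, ‖z (k + 1) j - z k j‖ ^ 2 with hD_def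
  have hDnonneg : ∀ k, 0 ≤ D k := fun k => by positivity
  have hD : ∀ k, D k = γ ^ 2 * P k := by
    intro k
    rw [hD_def, hP_def, Finset.mul_sum]
    refine Finset.sum_congr rfl fun j _ => ?_
    rw [hzz k j, norm_smul, Real.norm_eq_abs, abs_of_pos hγ0, mul_pow]
  have key2 : ∀ k, ρ (k + 1) ≤ ρ k - γ * (1 - γ) * P k := by
    intro k
    have hterm : ∀ j, ‖z (k + 1) j - zs j‖ ^ 2
        = ‖z k j - zs j‖ ^ 2 + 2 * (γ * ⟪z k j - zs j, Mx k j⟫) + γ ^ 2 * ‖Mx k j‖ ^ 2 := by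
      intro j
      have h1 : z (k + 1) j - zs j = (z k j - zs j) + γ • Mx k j := by
        rw [hz k j]; abel
      rw [h1, norm_add_sq_real, real_inner_smul_right, norm_smul, Real.norm_eq_abs,
        abs_of_pos hγ0, mul_pow]
    have hsum : ρ (k + 1) = ρ k + 2 * (γ * ∑ j, ⟪z k j - zs j, Mx k j⟫) + γ ^ 2 * P k := by
      rw [hρ_def]
      simp only [hterm]
      rw [Finset.sum_add_distrib, Finset.sum_add_distrib, ← Finset.mul_sum, ← Finset.mul_sum,
        ← Finset.mul_sum]
    have hk1 := key1 k
    have hγγ : 0 < γ := hγ0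
    nlinarith [hPnonneg k]
  have key3 : ∀ k, ρ (k + 1) + ((1 - γ) / γ) * D k ≤ ρ k := by
    intro k
    have h2 := key2 k
    have h3 : ((1 - γ) / γ) * D k = γ * (1 - γ) * P k := by
      rw [hD k]
      field_simp
    linarith
  have hc : 0 < (1 - γ) / γ := div_pos (by linarith) hγ0
  have hpartial : ∀ K, ρ K + ((1 - γ) / γ) * ∑ k ∈ Finset.range K, D k ≤ ρ 0 := by
    intro K
    induction K with
    | zero => simp
    | succ K ih =>
      rw [Finset.sum_range_succ, mul_add]
      have := key3 K
      linarith
  have hDsum : Summable D := by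
    apply summable_of_sum_range_le hDnonneg
    intro K
    have h1 := hpartial K
    have h2 := hρnonneg K
    have h3 : ((1 - γ) / γ) * (ρ 0 / ((1 - γ) / γ)) = ρ 0 := mul_div_cancel₀ _ hc.ne'
    nlinarith
  have hDto : Tendsto D atTop (𝓝 0) := hDsum.tendsto_atTop_zero
  have hsq : Tendsto (fun k => Real.sqrt (D k)) atTop (𝓝 0) := by
    have := (Real.continuous_sqrt.tendsto 0).comp hDto
    simpa [Function.comp_def] using this
  have hbound : ∀ k j, ‖z (k + 1) j - z k j‖ ≤ Real.sqrt (D k) := by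
    intro k j
    rw [show ‖z (k + 1) j - z k j‖ = Real.sqrt (‖z (k + 1) j - z k j‖ ^ 2) from
      (Real.sqrt_sq (norm_nonneg _)).symm]
    apply Real.sqrt_le_sqrt
    exact Finset.single_le_sum (f := fun j => ‖z (k + 1) j - z k j‖ ^ 2)
      (fun j _ => sq_nonneg _) (Finset.mem_univ j)
  constructor
  · apply squeeze_zero (g := fun k => (m : ℝ) * Real.sqrt (D k))
      (fun k => Finset.sum_nonneg fun i _ => norm_nonneg _)
    · intro k
      calc ∑ i, ‖z k i - z (k + 1) i‖ ≤ ∑ _i : Fin m, Real.sqrt (D k) := by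
            refine Finset.sum_le_sum fun i _ => ?_
            rw [norm_sub_rev]
            exact hbound k i
        _ = m * Real.sqrt (D k) := by
            rw [Finset.sum_const, Finset.card_univ, Fintype.card_fin, nsmul_eq_mul]
    · have := hsq.const_mul (m : ℝ)
      simpa using this
  · intro s hs
    obtain ⟨v, hv⟩ := auxA17 hn M hker s hs
    have hvs : ∀ i, s i = ∑ j, M j i * v j := by
      intro i
      rw [← hv]
      simp [Matrix.mulVec, dotProduct, Matrix.transpose_apply]
    have hid : ∀ k, ∑ i, s i • x k i = ∑ j, v j • Mx k j := by
      intro k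
      calc ∑ i, s i • x k i = ∑ i, ∑ j, (M j i * v j) • x k i := by
            refine Finset.sum_congr rfl fun i _ => ?_
            rw [hvs i, Finset.sum_smul]
        _ = ∑ j, ∑ i, (M j i * v j) • x k i := Finset.sum_comm
        _ = ∑ j, v j • Mx k j := by
            refine Finset.sum_congr rfl fun j _ => ?_
            rw [Finset.smul_sum]
            refine Finset.sum_congr rfl fun i _ => ?_
            rw [smul_smul, mul_comm]
    apply squeeze_zero (g := fun k => (∑ j, |v j|) * (γ⁻¹ * Real.sqrt (D k)))
      (fun k => norm_nonneg _)
    · intro k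
      rw [hid k]
      calc ‖∑ j, v j • Mx k j‖ ≤ ∑ j, ‖v j • Mx k j‖ := norm_sum_le _ _
        _ ≤ ∑ j, |v j| * (γ⁻¹ * Real.sqrt (D k)) := by
            refine Finset.sum_le_sum fun j _ => ?_
            rw [norm_smul, Real.norm_eq_abs]
            refine mul_le_mul_of_nonneg_left ?_ (abs_nonneg _)
            have h1 : Mx k j = γ⁻¹ • (z (k + 1) j - z k j) := by
              rw [hzz k j, smul_smul, inv_mul_cancel₀ hγ0.ne', one_smul]
            rw [h1, norm_smul, Real.norm_eq_abs, abs_of_pos (inv_pos.mpr hγ0)]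
            exact mul_le_mul_of_nonneg_left (hbound k j) (inv_pos.mpr hγ0).le
        _ = (∑ j, |v j|) * (γ⁻¹ * Real.sqrt (D k)) := by rw [Finset.sum_mul]
    · have := hsq.const_mul ((∑ j, |v j|) * γ⁻¹)
      simpa [mul_assoc] using this
end
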